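/- Shamir secret-sharing secrecy: Let F be a finite field with |F| > d, let s ∈ F, and let p be a polynomial of degree at most d whose constant coefficient is s and whose other d coefficients are chosen independently and uniformly at random from F. Then for any set of d distinct nonzero evaluation points a₁, …, a_d ∈ F, the joint distribution of (p(a₁), …, p(a_d)) is uniform on F^d, and in particular is independent of s. -/
import Mathlib

open Finset

/-- Shamir secrecy: the map from random coefficients to the `d` shares at distinct
nonzero points is a bijection of `F^d`, for any secret `s`. -/
theorem stmt_15 {F : Type*} [Field F] [Fintype F] (d : ℕ) (hd : 1 ≤ d)
    (hF : d < Fintype.card F) (a : Fin d → F) (ha : Function.Injective a)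
    (ha0 : ∀ i, a i ≠ 0) (s : F) :
    Function.Bijective
      (fun c : Fin d → F => fun i : Fin d => s + ∑ j : Fin d, c j * (a i) ^ ((j : ℕ) + 1)) := by
  set M : Matrix (Fin d) (Fin d) F := Matrix.diagonal a * Matrix.vandermonde a with hM
  have hMij : ∀ i j, M i j = a i ^ ((j : ℕ) + 1) := by
    intro i j
    simp [hM, Matrix.mul_apply, Matrix.diagonal, Matrix.vandermonde, pow_succ, mul_comm]
  have hdet : M.det ≠ 0 := by
    rw [hM, Matrix.det_mul, Matrix.det_diagonal]
    refine mul_ne_zero (Finset.prod_ne_zero_iff.2 fun i _ => ha0 i) ?_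
    exact Matrix.det_vandermonde_ne_zero_iff.2 ha
  have hinj : Function.Injective M.mulVec :=
    Matrix.mulVec_injective_iff_isUnit.2 ((Matrix.isUnit_iff_isUnit_det M).2 (isUnit_iff_ne_zero.2 hdet))
  rw [Finite.injective_iff_bijective.symm]
  intro c c' h
  apply hinj
  funext i
  have := congrFun h i
  simp only [Matrix.mulVec, dotProduct, hMij]
  simpa [mul_comm] using congrFun h i
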